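/- For all integers n and δ with n > δ ≥ 1: the minimum of ξ(G) over all connected simple graphs G on n vertices with minimum degree exactly δ equals ⌈2(n−1−δ)/δ⌉, and the minimum of π(G) over all connected simple graphs G on n vertices with minimum degree exactly δ equals ⌈2(n−1)/δ⌉. -/

import Mathlib

/-!
A vertex `u` of minimum degree `δ` is an endpoint of `2 (n - 1)` paths, each of which leaves or
enters `u` along one of its `δ` edges; the `2 (n - 1 - δ)` of them whose other endpoint is not
adjacent to `u` moreover have an internal vertex among the `δ` neighbours of `u`. Averaging gives
both lower bounds. They are attained by `K_n` minus the star joining `0` to the vertices `y > δ`: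
adjacent pairs are routed directly, and the `2 (n - 1 - δ)` non-adjacent ordered pairs through
the hubs `1, …, δ` in turn, so that an edge `{0, m}` carries its two direct paths together with
the at most `⌈2 (n - 1 - δ) / δ⌉` paths through the hub `m`.
-/

open Finset

namespace Forwarding

variable {V : Type*} [Fintype V] [DecidableEq V]

/-- A routing of a graph `G`: for every ordered pair of vertices, a fixed path.
(For `x = y` the path condition forces the trivial walk, so only the
`n(n-1)` paths between distinct vertices matter.) -/
structure Routing (G : SimpleGraph V) where
  walk : ∀ x y : V, G.Walk x y
  isPath : ∀ x y : V, (walk x y).IsPath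

/-- A routing is minimal if every specified path is a shortest path. -/
def Routing.IsMinimal {G : SimpleGraph V} (R : Routing G) : Prop :=
  ∀ x y : V, (R.walk x y).length = G.dist x y

/-- The load of a vertex `x`: the number of paths of the routing passing
through `x` as an internal vertex. -/
def vertexLoad {G : SimpleGraph V} (R : Routing G) (x : V) : ℕ :=
  (univ.filter fun p : V × V =>
    p.1 ≠ p.2 ∧ x ∈ (R.walk p.1 p.2).support ∧ x ≠ p.1 ∧ x ≠ p.2).card

/-- The load of an edge `e`: the number of paths of the routing traversing `e`. -/
def edgeLoad {G : SimpleGraph V} (R : Routing G) (e : Sym2 V) : ℕ :=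
  (univ.filter fun p : V × V => p.1 ≠ p.2 ∧ e ∈ (R.walk p.1 p.2).edges).card

/-- `ξ(G,R)`: the maximum vertex load of the routing `R`. -/
def routingVertexIndex {G : SimpleGraph V} (R : Routing G) : ℕ :=
  univ.sup (vertexLoad R)

/-- `π(G,R)`: the maximum edge load of the routing `R`. (Edges not in `G`
carry load `0`, so taking the `sup` over all of `Sym2 V` is equivalent.) -/
def routingEdgeIndex {G : SimpleGraph V} (R : Routing G) : ℕ :=
  univ.sup (edgeLoad R)

/-- The vertex-forwarding index `ξ(G)`. -/
noncomputable def xi (G : SimpleGraph V) : ℕ :=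
  sInf { k | ∃ R : Routing G, routingVertexIndex R = k }

/-- The vertex-forwarding index over minimal routings, `ξ_m(G)`. -/
noncomputable def xiMin (G : SimpleGraph V) : ℕ :=
  sInf { k | ∃ R : Routing G, R.IsMinimal ∧ routingVertexIndex R = k }

/-- The edge-forwarding index `π(G)`. -/
noncomputable def piIdx (G : SimpleGraph V) : ℕ :=
  sInf { k | ∃ R : Routing G, routingEdgeIndex R = k }

/-- The edge-forwarding index over minimal routings, `π_m(G)`. -/
noncomputable def piMinIdx (G : SimpleGraph V) : ℕ :=
  sInf { k | ∃ R : Routing G, R.IsMinimal ∧ routingEdgeIndex R = k }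

end Forwarding

theorem Nat.ceil_natCast_div_eq_ceilDiv {K : Type*} [Semifield K] [LinearOrder K]
    [IsStrictOrderedRing K] [FloorSemiring K] (a : ℕ) {b : ℕ} (hb : 0 < b) :
    ⌈(a : K) / b⌉₊ = a ⌈/⌉ b :=
  eq_of_forall_ge_iff fun c => by
    rw [Nat.ceil_le, ceilDiv_le_iff_le_mul hb, div_le_iff₀ (by exact_mod_cast hb), mul_comm]
    exact_mod_cast Iff.rfl

theorem Nat.add_two_mul_ceilDiv {a b : ℕ} (hb : 0 < b) : (a + 2 * b) ⌈/⌉ b = a ⌈/⌉ b + 2 := by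
  rw [Nat.ceilDiv_eq_add_pred_div, Nat.ceilDiv_eq_add_pred_div,
    show a + 2 * b + b - 1 = a + b - 1 + b * 2 by omega, Nat.add_mul_div_left _ _ hb]

theorem Finset.card_filter_mod_eq_le_ceilDiv {α : Type*} {s : Finset α} {f : α → ℕ} {N d : ℕ}
    (hd : 0 < d) (hf : Set.InjOn f s) (hN : ∀ a ∈ s, f a < N) (r : ℕ) :
    #{a ∈ s | f a % d = r} ≤ N ⌈/⌉ d := by
  have hcard := card_le_card_of_injOn (s := {a ∈ s | f a % d = r}) (t := range (N ⌈/⌉ d))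
    (fun a => f a / d) ?_ ?_
  · simpa using hcard
  · intro a ha
    have hle : N ≤ d * (N ⌈/⌉ d) := le_smul_ceilDiv hd
    simp only [coe_filter, Set.mem_ofPred_eq, coe_range, Set.mem_Iio] at ha ⊢
    rw [Nat.div_lt_iff_lt_mul hd]
    linarith [hN a ha.1]
  · intro a ha b hb hab
    simp only [coe_filter, Set.mem_ofPred_eq] at ha hb
    refine hf ha.1 hb.1 ?_
    rw [← Nat.div_add_mod (f a) d, ← Nat.div_add_mod (f b) d, ha.2, hb.2]
    simp only at hab
    rw [hab]

theorem Finset.card_filter_sym2_mk_eq_le_two {V : Type*} [Fintype V] [DecidableEq V]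
    (e : Sym2 V) : #{p : V × V | s(p.1, p.2) = e} ≤ 2 := by
  induction e using Sym2.ind with
  | h a b =>
    refine (card_le_card fun p hp => ?_).trans (card_le_two (a := (a, b)) (b := (b, a)))
    simp only [mem_filter, mem_univ, true_and, Sym2.eq_iff] at hp
    rcases hp with ⟨rfl, rfl⟩ | ⟨rfl, rfl⟩ <;> simp

theorem Finset.two_mul_card_le_of_mem_biUnion {α β : Type*} [DecidableEq α] {u : α}
    {T : Finset α} (hu : u ∉ T) {A : Finset β} {S : β → Finset (α × α)} {k : ℕ}
    (hS : ∀ b ∈ A, #(S b) ≤ k)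
    (hcover : ∀ t ∈ T, (u, t) ∈ A.biUnion S ∧ (t, u) ∈ A.biUnion S) :
    2 * #T ≤ #A * k := by
  have hdisj : Disjoint ({u} ×ˢ T) (T ×ˢ {u}) := by
    simp only [Finset.disjoint_left, mem_product, mem_singleton]
    rintro p ⟨hp, -⟩ ⟨hT, -⟩
    exact hu (hp ▸ hT)
  calc 2 * #T = #({u} ×ˢ T ∪ T ×ˢ {u}) := by
        rw [card_union_of_disjoint hdisj, card_product, card_product, card_singleton]; ring
    _ ≤ #(A.biUnion S) := by
        refine card_le_card (union_subset ?_ ?_) <;> rintro ⟨a, b⟩ hp <;>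
          obtain ⟨ha, hb⟩ := mem_product.1 hp
        · obtain rfl : a = u := mem_singleton.1 ha
          exact (hcover b hb).1
        · obtain rfl : b = u := mem_singleton.1 hb
          exact (hcover a ha).2
    _ ≤ #A * k := card_biUnion_le_card_mul _ _ _ hS

namespace Forwarding

open Finset SimpleGraph

section LowerBound

variable {V : Type*} [Fintype V] [DecidableEq V] {G : SimpleGraph V}

noncomputable def Routing.ofConnected (hG : G.Connected) : Routing G where
  walk x y := (hG.preconnected x y).some.bypass
  isPath x y := (hG.preconnected x y).some.bypass_isPath

theorem xi_le_routingVertexIndex (R : Routing G) : xi G ≤ routingVertexIndex R :=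
  Nat.sInf_le ⟨R, rfl⟩

theorem piIdx_le_routingEdgeIndex (R : Routing G) : piIdx G ≤ routingEdgeIndex R :=
  Nat.sInf_le ⟨R, rfl⟩

theorem exists_routingVertexIndex_eq_xi (hG : G.Connected) :
    ∃ R : Routing G, routingVertexIndex R = xi G :=
  Nat.sInf_mem (s := {k | ∃ R : Routing G, routingVertexIndex R = k})
    ⟨_, Routing.ofConnected hG, rfl⟩

theorem exists_routingEdgeIndex_eq_piIdx (hG : G.Connected) :
    ∃ R : Routing G, routingEdgeIndex R = piIdx G :=
  Nat.sInf_mem (s := {k | ∃ R : Routing G, routingEdgeIndex R = k})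
    ⟨_, Routing.ofConnected hG, rfl⟩

variable [DecidableRel G.Adj]

theorem two_mul_degree_compl_le_degree_mul_routingVertexIndex (R : Routing G) (u : V) :
    2 * Gᶜ.degree u ≤ G.degree u * routingVertexIndex R := by
  rw [← card_neighborFinset_eq_degree, ← card_neighborFinset_eq_degree]
  have hu : u ∉ Gᶜ.neighborFinset u := by simp
  refine two_mul_card_le_of_mem_biUnion (S := fun a => {p : V × V | p.1 ≠ p.2 ∧
      a ∈ (R.walk p.1 p.2).support ∧ a ≠ p.1 ∧ a ≠ p.2}) hu
    (fun a _ => le_sup (f := vertexLoad R) (mem_univ a)) fun t ht => ?_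
  obtain ⟨hut, hnadj⟩ := (mem_neighborFinset _ _ _).1 ht
  have hfwd : ¬ (R.walk u t).Nil := Walk.not_nil_of_ne hut
  have hbwd : ¬ (R.walk t u).Nil := Walk.not_nil_of_ne hut.symm
  simp only [mem_biUnion, mem_neighborFinset, mem_filter, mem_univ, true_and]
  refine ⟨⟨_, Walk.adj_snd hfwd, hut, ?_, (Walk.adj_snd hfwd).ne', ?_⟩,
    ⟨_, (Walk.adj_penultimate hbwd).symm, hut.symm, ?_, ?_, (Walk.adj_penultimate hbwd).ne⟩⟩
  · exact List.mem_of_mem_tail (Walk.snd_mem_tail_support hfwd)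
  · exact fun h => hnadj (h ▸ Walk.adj_snd hfwd)
  · exact List.mem_of_mem_dropLast (Walk.penultimate_mem_dropLast_support hbwd)
  · exact fun h => hnadj (h ▸ (Walk.adj_penultimate hbwd).symm)

theorem two_mul_card_sub_one_le_degree_mul_routingEdgeIndex (R : Routing G) (u : V) :
    2 * (Fintype.card V - 1) ≤ G.degree u * routingEdgeIndex R := by
  rw [← card_incidenceFinset_eq_degree, ← card_univ, ← card_erase_of_mem (mem_univ u)]
  refine two_mul_card_le_of_mem_biUnion (S := fun e => {p : V × V | p.1 ≠ p.2 ∧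
      e ∈ (R.walk p.1 p.2).edges}) (notMem_erase u univ)
    (fun e _ => le_sup (f := edgeLoad R) (mem_univ e)) fun t ht => ?_
  have hut : u ≠ t := (ne_of_mem_erase ht).symm
  have hfwd : ¬ (R.walk u t).Nil := Walk.not_nil_of_ne hut
  have hbwd : ¬ (R.walk t u).Nil := Walk.not_nil_of_ne hut.symm
  simp only [mem_biUnion, mem_incidenceFinset, mem_filter, mem_univ, true_and]
  exact ⟨⟨_, G.mk'_mem_incidenceSet_left_iff.2 (Walk.adj_snd hfwd), hut,
      Walk.mk_start_snd_mem_edges hfwd⟩,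
    ⟨_, G.mk'_mem_incidenceSet_right_iff.2 (Walk.adj_penultimate hbwd), hut.symm,
      Walk.mk_penultimate_end_mem_edges hbwd⟩⟩

theorem ceilDiv_le_xi (hG : G.Connected) {d : ℕ} (hδ : G.minDegree = d) (hd : 0 < d) :
    (2 * (Fintype.card V - 1 - d)) ⌈/⌉ d ≤ xi G := by
  have := hG.nonempty
  obtain ⟨u, hu⟩ := G.exists_minimal_degree_vertex
  obtain ⟨R, hR⟩ := exists_routingVertexIndex_eq_xi hG
  have := two_mul_degree_compl_le_degree_mul_routingVertexIndex R u
  rw [degree_compl, ← hu, hδ, hR] at this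
  exact (ceilDiv_le_iff_le_mul hd).2 this

theorem ceilDiv_le_piIdx (hG : G.Connected) {d : ℕ} (hδ : G.minDegree = d) (hd : 0 < d) :
    (2 * (Fintype.card V - 1)) ⌈/⌉ d ≤ piIdx G := by
  have := hG.nonempty
  obtain ⟨u, hu⟩ := G.exists_minimal_degree_vertex
  obtain ⟨R, hR⟩ := exists_routingEdgeIndex_eq_piIdx hG
  have := two_mul_card_sub_one_le_degree_mul_routingEdgeIndex R u
  rw [← hu, hδ, hR] at this
  exact (ceilDiv_le_iff_le_mul hd).2 this

end LowerBound

section TwoStep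

variable {V : Type*} [DecidableEq V] {G : SimpleGraph V} [DecidableRel G.Adj]
  (mid : V → V → V) (hmid : ∀ x y, Gᶜ.Adj x y → G.Adj x (mid x y) ∧ G.Adj (mid x y) y)

def twoStepWalk (x y : V) : G.Walk x y :=
  if hxy : x = y then hxy ▸ Walk.nil
  else if hadj : G.Adj x y then hadj.toWalk
  else Walk.cons (hmid x y ⟨hxy, hadj⟩).1 (hmid x y ⟨hxy, hadj⟩).2.toWalk

variable {mid hmid}

theorem support_twoStepWalk {x y : V} (hxy : x ≠ y) :
    (twoStepWalk mid hmid x y).support = if G.Adj x y then [x, y] else [x, mid x y, y] := by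
  unfold twoStepWalk
  rw [dif_neg hxy]
  split_ifs <;> simp

theorem edges_twoStepWalk {x y : V} (hxy : x ≠ y) :
    (twoStepWalk mid hmid x y).edges =
      if G.Adj x y then [s(x, y)] else [s(x, mid x y), s(mid x y, y)] := by
  unfold twoStepWalk
  rw [dif_neg hxy]
  split_ifs <;> simp

theorem isPath_twoStepWalk (x y : V) : (twoStepWalk mid hmid x y).IsPath := by
  by_cases hxy : x = y
  · subst hxy
    simp [twoStepWalk]
  rw [Walk.isPath_def, support_twoStepWalk hxy]
  split_ifs with hadj
  · simp [hxy]
  · have h := hmid x y ⟨hxy, hadj⟩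
    simp [h.1.ne, h.2.ne, hxy]

variable [Fintype V]

variable (mid hmid) in
def twoStepRouting : Routing G := ⟨twoStepWalk mid hmid, isPath_twoStepWalk⟩

theorem vertexLoad_twoStepRouting_le (m : V) :
    vertexLoad (twoStepRouting mid hmid) m ≤
      #{p : V × V | Gᶜ.Adj p.1 p.2 ∧ mid p.1 p.2 = m} := by
  refine card_le_card fun p hp => ?_
  simp only [mem_filter, mem_univ, true_and] at hp ⊢
  obtain ⟨hne, hmem, hm1, hm2⟩ := hp
  change m ∈ (twoStepWalk mid hmid p.1 p.2).support at hmem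
  rw [support_twoStepWalk hne] at hmem
  split_ifs at hmem with hadj
  · simp [hm1, hm2] at hmem
  · simp only [List.mem_cons, List.not_mem_nil, or_false] at hmem
    exact ⟨⟨hne, hadj⟩, by tauto⟩

theorem edgeLoad_twoStepRouting_le (e : Sym2 V) :
    edgeLoad (twoStepRouting mid hmid) e ≤ 2 + #{p : V × V | Gᶜ.Adj p.1 p.2 ∧
      (e = s(p.1, mid p.1 p.2) ∨ e = s(mid p.1 p.2, p.2))} := by
  refine (card_le_card fun p hp => ?_).trans <|
    (card_union_le _ _).trans (Nat.add_le_add_right (card_filter_sym2_mk_eq_le_two e) _)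
  simp only [mem_union, mem_filter, mem_univ, true_and] at hp ⊢
  obtain ⟨hne, hmem⟩ := hp
  change e ∈ (twoStepWalk mid hmid p.1 p.2).edges at hmem
  rw [edges_twoStepWalk hne] at hmem
  split_ifs at hmem with hadj
  · exact Or.inl (List.mem_singleton.1 hmem).symm
  · simp only [List.mem_cons, List.not_mem_nil, or_false] at hmem
    exact Or.inr ⟨⟨hne, hadj⟩, hmem⟩

end TwoStep

section CompleteMinusStar

variable {n d : ℕ}

def completeMinusStar (n d : ℕ) : SimpleGraph (Fin n) :=
  (SimpleGraph.fromRel fun x y : Fin n => x.val = 0 ∧ d < y.val)ᶜ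

theorem compl_completeMinusStar_adj {x y : Fin n} :
    (completeMinusStar n d)ᶜ.Adj x y ↔
      (x.val = 0 ∧ d < y.val) ∨ (y.val = 0 ∧ d < x.val) := by
  rw [completeMinusStar, compl_compl, fromRel_adj, and_iff_right_iff_imp]
  rintro h rfl
  omega

theorem completeMinusStar_adj_of_mem_Icc {m z : Fin n} (hm : m.val ∈ Set.Icc 1 d)
    (hz : z.val = 0 ∨ d < z.val) : (completeMinusStar n d).Adj m z := by
  rw [← compl_compl (completeMinusStar n d), compl_adj, compl_completeMinusStar_adj]
  obtain ⟨h1, h2⟩ := hm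
  exact ⟨fun h => by subst h; omega, by omega⟩

section Degree

variable [DecidableRel (completeMinusStar n d).Adj]

theorem degree_compl_completeMinusStar_zero (hn : d < n) :
    (completeMinusStar n d)ᶜ.degree ⟨0, by omega⟩ = n - 1 - d := by
  rw [← card_neighborFinset_eq_degree, ← Fin.card_Ioi (⟨d, hn⟩ : Fin n)]
  congr 1
  ext y
  rw [mem_neighborFinset, compl_completeMinusStar_adj]
  simp [Fin.lt_def]

theorem degree_compl_completeMinusStar_le (hn : d < n) (v : Fin n) :
    (completeMinusStar n d)ᶜ.degree v ≤
      (completeMinusStar n d)ᶜ.degree ⟨0, by omega⟩ := by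
  obtain hzero | hpos := Nat.eq_zero_or_pos v.val
  · rw [show v = ⟨0, Nat.zero_lt_of_lt hn⟩ from Fin.ext hzero]
  obtain hv | hv := Nat.eq_zero_or_pos ((completeMinusStar n d)ᶜ.degree v)
  · omega
  obtain ⟨w, hvw⟩ := ((completeMinusStar n d)ᶜ.degree_pos_iff_exists_adj v).1 hv
  have hv0 : d < v.val := by rw [compl_completeMinusStar_adj] at hvw; omega
  calc (completeMinusStar n d)ᶜ.degree v ≤ #{(⟨0, by omega⟩ : Fin n)} := by
        refine card_le_card fun w hw => mem_singleton.2 (Fin.ext ?_)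
        rw [mem_neighborFinset, compl_completeMinusStar_adj] at hw
        simp only
        omega
    _ ≤ (completeMinusStar n d)ᶜ.degree ⟨0, by omega⟩ :=
        (degree_pos_iff_exists_adj _ _).2
          ⟨v, compl_completeMinusStar_adj.2 (.inl ⟨rfl, hv0⟩)⟩

theorem minDegree_completeMinusStar (hn : d < n) : (completeMinusStar n d).minDegree = d := by
  have : Nonempty (Fin n) := ⟨⟨0, by omega⟩⟩
  have hdeg (v : Fin n) : (completeMinusStar n d).degree v =
      n - 1 - (completeMinusStar n d)ᶜ.degree v := by
    have := (completeMinusStar n d).degree_lt_card_verts v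
    rw [degree_compl, Fintype.card_fin] at *
    omega
  have h0 := degree_compl_completeMinusStar_zero hn
  refine le_antisymm ?_ (le_minDegree_of_forall_le_degree _ _ fun v => ?_)
  · refine (minDegree_le_degree _ ⟨0, by omega⟩).trans ?_
    rw [hdeg, h0]
    omega
  · have := degree_compl_completeMinusStar_le hn v
    rw [hdeg]
    omega

end Degree

/-- Numbers the non-adjacent ordered pairs `(0, y)` and `(y, 0)`, `d < y`, by
`0, 1, …, 2 (n - 1 - d) - 1`. -/
def pairIndex (d : ℕ) (x y : Fin n) : ℕ :=
  if x.val = 0 then 2 * (y.val - (d + 1)) else 2 * (x.val - (d + 1)) + 1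

theorem pairIndex_lt {x y : Fin n} (hxy : (completeMinusStar n d)ᶜ.Adj x y) :
    pairIndex d x y < 2 * (n - 1 - d) := by
  rw [compl_completeMinusStar_adj] at hxy
  have := x.isLt
  have := y.isLt
  unfold pairIndex
  split_ifs <;> omega

theorem injOn_pairIndex : Set.InjOn (fun p : Fin n × Fin n => pairIndex d p.1 p.2)
    {p | (completeMinusStar n d)ᶜ.Adj p.1 p.2} := by
  rintro ⟨x, y⟩ hxy ⟨x', y'⟩ hxy' h
  simp only [Set.mem_ofPred_eq, compl_completeMinusStar_adj] at hxy hxy'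
  simp only [pairIndex] at h
  split_ifs at h <;> ext <;> simp only [Fin.val_inj] <;> omega

section Hub

variable (hd : 0 < d) (hn : d < n)

/-- Spreads the non-adjacent pairs evenly over the hubs `1, …, d`, the common neighbours of `0`
and of the vertices `y > d`. -/
def hub (x y : Fin n) : Fin n :=
  ⟨pairIndex d x y % d + 1, by have := Nat.mod_lt (pairIndex d x y) hd; omega⟩

theorem hub_mem_Icc (x y : Fin n) : (hub hd hn x y).val ∈ Set.Icc 1 d :=
  ⟨Nat.le_add_left _ _, Nat.mod_lt _ hd⟩

theorem adj_hub {x y : Fin n} (hxy : (completeMinusStar n d)ᶜ.Adj x y) :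
    (completeMinusStar n d).Adj x (hub hd hn x y) ∧
      (completeMinusStar n d).Adj (hub hd hn x y) y := by
  rw [compl_completeMinusStar_adj] at hxy
  exact ⟨(completeMinusStar_adj_of_mem_Icc (hub_mem_Icc hd hn x y) (by omega)).symm,
    completeMinusStar_adj_of_mem_Icc (hub_mem_Icc hd hn x y) (by omega)⟩

theorem hub_eq_of_mem_legs {p q : Fin n × Fin n} {e : Sym2 (Fin n)}
    (hp : (completeMinusStar n d)ᶜ.Adj p.1 p.2) (hq : (completeMinusStar n d)ᶜ.Adj q.1 q.2)
    (hep : e = s(p.1, hub hd hn p.1 p.2) ∨ e = s(hub hd hn p.1 p.2, p.2))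
    (heq : e = s(q.1, hub hd hn q.1 q.2) ∨ e = s(hub hd hn q.1 q.2, q.2)) :
    hub hd hn p.1 p.2 = hub hd hn q.1 q.2 := by
  -- a leg joins its hub to a vertex outside `1, …, d`, so it determines the hub
  have leg_eq {r : Fin n × Fin n} (hr : (completeMinusStar n d)ᶜ.Adj r.1 r.2)
      (her : e = s(r.1, hub hd hn r.1 r.2) ∨ e = s(hub hd hn r.1 r.2, r.2)) :
      ∃ z : Fin n, e = s(hub hd hn r.1 r.2, z) ∧ (z.val = 0 ∨ d < z.val) := by
    rw [compl_completeMinusStar_adj] at hr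
    rcases her with rfl | rfl
    exacts [⟨r.1, Sym2.eq_swap, by omega⟩, ⟨r.2, rfl, by omega⟩]
  obtain ⟨z, rfl, -⟩ := leg_eq hp hep
  obtain ⟨z', he, hz'⟩ := leg_eq hq heq
  rcases Sym2.eq_iff.1 he with ⟨h, -⟩ | ⟨h, -⟩
  · exact h
  · have := hub_mem_Icc hd hn p.1 p.2
    rw [h] at this
    exact absurd hz' (by simp only [Set.mem_Icc] at this; omega)

section Load

variable [DecidableRel (completeMinusStar n d).Adj]

theorem card_filter_hub_eq_le (m : Fin n) :
    #{p : Fin n × Fin n | (completeMinusStar n d)ᶜ.Adj p.1 p.2 ∧ hub hd hn p.1 p.2 = m} ≤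
      (2 * (n - 1 - d)) ⌈/⌉ d := by
  refine (card_le_card fun p hp => ?_).trans (card_filter_mod_eq_le_ceilDiv hd
    (s := {p : Fin n × Fin n | (completeMinusStar n d)ᶜ.Adj p.1 p.2})
    (by simpa using injOn_pairIndex) (fun p hp => pairIndex_lt (by simpa using hp))
    (m.val - 1))
  simp only [mem_filter, mem_univ, true_and] at hp ⊢
  obtain ⟨hadj, rfl⟩ := hp
  exact ⟨hadj, by simp [hub]⟩

theorem card_filter_legs_le (e : Sym2 (Fin n)) :
    #{p : Fin n × Fin n | (completeMinusStar n d)ᶜ.Adj p.1 p.2 ∧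
      (e = s(p.1, hub hd hn p.1 p.2) ∨ e = s(hub hd hn p.1 p.2, p.2))} ≤
      (2 * (n - 1 - d)) ⌈/⌉ d := by
  obtain hempty | ⟨q, hq⟩ := Finset.eq_empty_or_nonempty
    {p : Fin n × Fin n | (completeMinusStar n d)ᶜ.Adj p.1 p.2 ∧
      (e = s(p.1, hub hd hn p.1 p.2) ∨ e = s(hub hd hn p.1 p.2, p.2))}
  · rw [hempty, card_empty]
    exact Nat.zero_le _
  refine (card_le_card fun p hp => ?_).trans (card_filter_hub_eq_le hd hn (hub hd hn q.1 q.2))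
  simp only [mem_filter, mem_univ, true_and] at hp hq ⊢
  exact ⟨hp.1, hub_eq_of_mem_legs hd hn hp.1 hq.1 hp.2 hq.2⟩

end Load

end Hub

theorem completeMinusStar_connected (hd : 0 < d) (hn : d < n) :
    (completeMinusStar n d).Connected := by
  classical
  have : Nonempty (Fin n) := ⟨⟨0, by omega⟩⟩
  exact ⟨fun x y => ⟨twoStepWalk (hub hd hn) (fun _ _ => adj_hub hd hn) x y⟩⟩

theorem xi_completeMinusStar_le (hd : 0 < d) (hn : d < n) :
    xi (completeMinusStar n d) ≤ (2 * (n - 1 - d)) ⌈/⌉ d := by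
  classical
  exact (xi_le_routingVertexIndex (twoStepRouting _ fun _ _ => adj_hub hd hn)).trans <|
    Finset.sup_le fun m _ =>
      (vertexLoad_twoStepRouting_le m).trans (card_filter_hub_eq_le hd hn m)

theorem piIdx_completeMinusStar_le (hd : 0 < d) (hn : d < n) :
    piIdx (completeMinusStar n d) ≤ (2 * (n - 1)) ⌈/⌉ d := by
  classical
  rw [show 2 * (n - 1) = 2 * (n - 1 - d) + 2 * d by omega, Nat.add_two_mul_ceilDiv hd, add_comm]
  exact (piIdx_le_routingEdgeIndex (twoStepRouting _ fun _ _ => adj_hub hd hn)).trans <|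
    Finset.sup_le fun e _ => (edgeLoad_twoStepRouting_le e).trans
      (Nat.add_le_add_left (card_filter_legs_le hd hn e) 2)

theorem xi_completeMinusStar (hd : 0 < d) (hn : d < n) :
    xi (completeMinusStar n d) = (2 * (n - 1 - d)) ⌈/⌉ d := by
  classical
  refine le_antisymm (xi_completeMinusStar_le hd hn) ?_
  simpa using
    ceilDiv_le_xi (completeMinusStar_connected hd hn) (minDegree_completeMinusStar hn) hd

theorem piIdx_completeMinusStar (hd : 0 < d) (hn : d < n) :
    piIdx (completeMinusStar n d) = (2 * (n - 1)) ⌈/⌉ d := by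
  classical
  refine le_antisymm (piIdx_completeMinusStar_le hd hn) ?_
  simpa using
    ceilDiv_le_piIdx (completeMinusStar_connected hd hn) (minDegree_completeMinusStar hn) hd

end CompleteMinusStar

end Forwarding

/-- For `n > δ ≥ 1`, the minimum of `ξ(G)` over connected
graphs on `n` vertices with minimum degree `δ` equals `⌈2(n-1-δ)/δ⌉`, and
the minimum of `π(G)` over such graphs equals `⌈2(n-1)/δ⌉`. -/
theorem forwarding_min_over_minDegree (n d : ℕ) (hd : 1 ≤ d) (hn : d < n) :
    (sInf { k | ∃ G : SimpleGraph (Fin n), G.Connected ∧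
        (@SimpleGraph.minDegree (Fin n) G _ (Classical.decRel _)) = d ∧
        Forwarding.xi G = k } : ℤ) = ⌈(2 * ((n : ℚ) - 1 - d)) / d⌉ ∧
    (sInf { k | ∃ G : SimpleGraph (Fin n), G.Connected ∧
        (@SimpleGraph.minDegree (Fin n) G _ (Classical.decRel _)) = d ∧
        Forwarding.piIdx G = k } : ℤ) = ⌈(2 * ((n : ℚ) - 1)) / d⌉ := by
  classical
  have hceil (a : ℕ) : ⌈(a : ℚ) / d⌉ = ((a ⌈/⌉ d : ℕ) : ℤ) := by
    rw [← Nat.ceil_natCast_div_eq_ceilDiv (K := ℚ) a hd,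
      Int.natCast_ceil_eq_ceil (by positivity)]
  have hcast : (2 * ((n : ℚ) - 1 - d)) = ((2 * (n - 1 - d) : ℕ) : ℚ) ∧
      (2 * ((n : ℚ) - 1)) = ((2 * (n - 1) : ℕ) : ℚ) := by
    push_cast [Nat.cast_sub (by omega : d ≤ n - 1), Nat.cast_sub (by omega : 1 ≤ n)]
    exact ⟨by ring, by ring⟩
  rw [hcast.1, hcast.2, hceil, hceil]
  have hconn := Forwarding.completeMinusStar_connected hd hn
  have hmin := Forwarding.minDegree_completeMinusStar hn
  refine ⟨IsLeast.csInf_eq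
      ⟨⟨_, hconn, hmin, by rw [Forwarding.xi_completeMinusStar hd hn]⟩, ?_⟩,
    IsLeast.csInf_eq
      ⟨⟨_, hconn, hmin, by rw [Forwarding.piIdx_completeMinusStar hd hn]⟩, ?_⟩⟩ <;>
    rintro _ ⟨G, hG, hδ, rfl⟩
  · simpa using Forwarding.ceilDiv_le_xi hG hδ hd
  · simpa using Forwarding.ceilDiv_le_piIdx hG hδ hd
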